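/- arXiv:1609.07206 — 3 statements merged into one kernel-verified Lean document; each statement's English description precedes it below -/
import Mathlib

section
/- For all x, y ∈ 𝔻 and the first extremal positive ('trim as you go') trimming operator T^{(1,+)}_{rim} defined by T^{(1,+)}_{rim}(x) := x − S_{+Δ}(x), one has ‖T^{(1,+)}_{rim}(x) − T^{(1,+)}_{rim}(y)‖ ≤ 3‖x − y‖; in particular T^{(1,+)}_{rim} is Lipschitz continuous in the supremum norm on 𝔻. -/
open Filter Topology Set unitInterval

noncomputable section

open scoped Classical

instance : Fact ((0:ℝ) ≤ 1) := ⟨zero_le_one⟩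

/-- The space `𝔻` of càdlàg functions on `[0,1]`: right-continuous everywhere with
finite left limits everywhere (conditions at the endpoints hold vacuously). -/
def Cadlag (x : I → ℝ) : Prop :=
  (∀ τ : I, Tendsto x (𝓝[>] τ) (𝓝 (x τ))) ∧ (∀ τ : I, ∃ l : ℝ, Tendsto x (𝓝[<] τ) (𝓝 l))

/-- The sup-norm `‖x‖ = sup_{0 ≤ τ ≤ 1} |x(τ)|`. -/
def dNorm (x : I → ℝ) : ℝ := ⨆ τ : I, |x τ|

/-- The jump `Δx(τ) = x(τ) - x(τ-)` of `x` at `τ`, with `Δx(0) := 0`. -/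
def jump (x : I → ℝ) (τ : I) : ℝ := if τ = 0 then 0 else x τ - Function.leftLim x τ

/-- The running supremum `S(x)(τ) = sup_{0 ≤ s ≤ τ} x(s)`. -/
def runSup (x : I → ℝ) (τ : I) : ℝ := sSup (x '' {s : I | s ≤ τ})

/-- The running absolute supremum `S̃(x)(τ) = sup_{0 ≤ s ≤ τ} |x(s)|`. -/
def runAbsSup (x : I → ℝ) (τ : I) : ℝ := sSup ((fun s => |x s|) '' {s : I | s ≤ τ})

/-- The largest positive jump `S_{+Δ}(x)(τ) = sup_{0 ≤ s ≤ τ} Δx(s)`. -/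
def posJumpSup (x : I → ℝ) (τ : I) : ℝ := sSup (jump x '' {s : I | s ≤ τ})

/-- The largest modulus jump `S̃_Δ(x)(τ) = sup_{0 ≤ s ≤ τ} |Δx(s)|`. -/
def modJumpSup (x : I → ℝ) (τ : I) : ℝ := sSup ((fun s => |jump x s|) '' {s : I | s ≤ τ})

/-- The first extremal positive trimming ("trim as you go") operator
`T^{(1,+)}_{rim}(x) = x - S_{+Δ}(x)`. -/
def trimPos (x : I → ℝ) : I → ℝ := fun τ => x τ - posJumpSup x τ

/-- `Λ`: continuous strictly increasing bijections of `[0,1]` fixing the endpoints. -/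
def IsTimeChange (l : I → I) : Prop := Continuous l ∧ StrictMono l ∧ l 0 = 0 ∧ l 1 = 1

/-- Convergence in the (strong) Skorokhod `J₁`-topology. -/
def J1Tendsto (xn : ℕ → I → ℝ) (x : I → ℝ) : Prop :=
  ∃ l : ℕ → I → I, (∀ n, IsTimeChange (l n)) ∧
    Tendsto (fun n => dNorm (fun τ => (l n τ : ℝ) - (τ : ℝ))) atTop (𝓝 0) ∧
    Tendsto (fun n => dNorm (fun τ => xn n (l n τ) - x τ)) atTop (𝓝 0)

/-- `Ã_τ(x)`: the times `s ∈ (0,τ]` of the largest modulus jump of `x` on `[0,τ]`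
(empty when `S̃_Δ(x)(τ) = 0`). -/
def tildeA (x : I → ℝ) (τ : I) : Set I :=
  {s : I | 0 < s ∧ s ≤ τ ∧ 0 < |jump x s| ∧ |jump x s| = modJumpSup x τ}

/-- `A⁺_τ(x)`: the times `s ∈ (0,τ]` of the largest positive jump of `x` on `[0,τ]`
(empty when `S_{+Δ}(x)(τ) = 0`). -/
def posA (x : I → ℝ) (τ : I) : Set I :=
  {s : I | 0 < s ∧ s ≤ τ ∧ 0 < jump x s ∧ jump x s = posJumpSup x τ}

/-- The signed largest-modulus ("trim as you go") trimmer `𝔗_rim`: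
`𝔗_rim(x)(τ) = x(τ) - Δx(L̃_τ(x))` if `Ã_τ(x) ≠ ∅`, `x(τ)` otherwise, where
`L̃_τ(x) = max Ã_τ(x)`. -/
def sgnModTrim (x : I → ℝ) : I → ℝ := fun τ =>
  if (tildeA x τ).Nonempty then x τ - jump x (sSup (tildeA x τ)) else x τ

/-- The record time ("lookback") trimmer:
`R_trim(x) = x - Δx(R₁(x))·1_{[R₁(x),1]}` if `A⁺₁(x) ≠ ∅`, `x` otherwise, where
`R₁(x) = min A⁺₁(x)`. -/
def recordTrim (x : I → ℝ) : I → ℝ := fun τ =>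
  if (posA x 1).Nonempty ∧ sInf (posA x 1) ≤ τ then x τ - jump x (sInf (posA x 1)) else x τ

/-- The modulus record time trimmer:
`R̃_trim(x) = x - Δx(R̃₁(x))·1_{[R̃₁(x),1]}` if `Ã₁(x) ≠ ∅`, `x` otherwise, where
`R̃₁(x) = min Ã₁(x)`. -/
def modRecordTrim (x : I → ℝ) : I → ℝ := fun τ =>
  if (tildeA x 1).Nonempty ∧ sInf (tildeA x 1) ≤ τ then x τ - jump x (sInf (tildeA x 1)) else x τ

/-!
Both `x τ` and the left limit `x (τ-)` move by at most `‖x - y‖` when `x` is replaced by `y`,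
so the jump `Δx τ` moves by at most `2‖x - y‖`; a supremum of a family moved uniformly by at most
`2‖x - y‖` itself moves by at most that much, which gives `|S_{+Δ}(x) - S_{+Δ}(y)| ≤ 2‖x - y‖`,
and `‖x - y‖` more from the identity part of `x - S_{+Δ}(x)`. All suprema involved are finite
because a càdlàg function is locally bounded, hence bounded on the compact `[0,1]`.
-/

section SupDifference

variable {α : Type*} {S : Set α} {f g : α → ℝ} {c : ℝ}

lemma csSup_image_le_csSup_image_add (hS : S.Nonempty) (hg : BddAbove (g '' S))
    (h : ∀ s ∈ S, f s ≤ g s + c) : sSup (f '' S) ≤ sSup (g '' S) + c :=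
  csSup_le (hS.image f) <| forall_mem_image.2 fun s hs =>
    (h s hs).trans (add_le_add_left (le_csSup hg (mem_image_of_mem g hs)) c)

lemma abs_csSup_image_sub_csSup_image_le (hS : S.Nonempty) (hf : BddAbove (f '' S))
    (hg : BddAbove (g '' S)) (h : ∀ s ∈ S, |f s - g s| ≤ c) :
    |sSup (f '' S) - sSup (g '' S)| ≤ c := by
  rw [abs_sub_le_iff, sub_le_iff_le_add', sub_le_iff_le_add']
  exact ⟨csSup_image_le_csSup_image_add hS hg fun s hs => by linarith [(abs_le.1 (h s hs)).2],
    csSup_image_le_csSup_image_add hS hf fun s hs => by linarith [(abs_le.1 (h s hs)).1]⟩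

end SupDifference

lemma unitInterval.nhdsLT_neBot_of_ne_zero {τ : I} (hτ : τ ≠ 0) : (𝓝[<] τ).NeBot :=
  nhdsLT_neBot_of_exists_lt ⟨0, unitInterval.pos_iff_ne_zero.2 hτ⟩

namespace Cadlag

variable {x y : I → ℝ}

lemma sub (hx : Cadlag x) (hy : Cadlag y) : Cadlag fun τ => x τ - y τ := by
  refine ⟨fun τ => (hx.1 τ).sub (hy.1 τ), fun τ => ?_⟩
  obtain ⟨l, hl⟩ := hx.2 τ
  obtain ⟨m, hm⟩ := hy.2 τ
  exact ⟨l - m, hl.sub hm⟩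

/-- Near `τ` the values of `x` stay close to its left limit or to `x τ`. -/
lemma exists_mem_nhds_isBounded_image (hx : Cadlag x) (τ : I) :
    ∃ t ∈ 𝓝 τ, Bornology.IsBounded (x '' t) := by
  obtain ⟨l, hl⟩ := hx.2 τ
  have hright : Tendsto x (𝓝[≥] τ) (𝓝 (x τ)) :=
    (continuousWithinAt_Ioi_iff_Ici.1 (hx.1 τ)).tendsto
  have hnear : ∀ᶠ s in 𝓝 τ, x s ∈ Metric.ball l 1 ∪ Metric.ball (x τ) 1 := by
    rw [← nhdsLT_sup_nhdsGE, eventually_sup]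
    exact ⟨(hl.eventually_mem (Metric.ball_mem_nhds l one_pos)).mono fun _ => Or.inl,
      (hright.eventually_mem (Metric.ball_mem_nhds _ one_pos)).mono fun _ => Or.inr⟩
  exact ⟨_, hnear, (Metric.isBounded_ball.union Metric.isBounded_ball).subset
    (image_subset_iff.2 fun _ h => h)⟩

lemma bddAbove_range_abs (hx : Cadlag x) : BddAbove (range fun τ => |x τ|) := by
  obtain ⟨C, hC⟩ := isBounded_iff_forall_norm_le.1 <|
    Bornology.isBounded_image_of_isLocallyBounded_of_isCompact isCompact_univ
      hx.exists_mem_nhds_isBounded_image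
  refine ⟨C, forall_mem_range.2 fun τ => ?_⟩
  simpa only [Real.norm_eq_abs] using hC _ (mem_image_of_mem x (mem_univ τ))

lemma abs_le_dNorm (hx : Cadlag x) (τ : I) : |x τ| ≤ dNorm x :=
  le_ciSup hx.bddAbove_range_abs τ

lemma tendsto_leftLim (hx : Cadlag x) {τ : I} (hτ : τ ≠ 0) :
    Tendsto x (𝓝[<] τ) (𝓝 (Function.leftLim x τ)) := by
  have := unitInterval.nhdsLT_neBot_of_ne_zero hτ
  obtain ⟨l, hl⟩ := hx.2 τ
  rwa [leftLim_eq_of_tendsto hl]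

lemma jump_sub (hx : Cadlag x) (hy : Cadlag y) (τ : I) :
    jump (fun s => x s - y s) τ = jump x τ - jump y τ := by
  by_cases hτ : τ = 0
  · simp [jump, hτ]
  have := unitInterval.nhdsLT_neBot_of_ne_zero hτ
  simp only [jump, if_neg hτ,
    leftLim_eq_of_tendsto ((hx.tendsto_leftLim hτ).sub (hy.tendsto_leftLim hτ))]
  ring

lemma abs_jump_le {C : ℝ} (hx : Cadlag x) (hC : ∀ s, |x s| ≤ C) (τ : I) :
    |jump x τ| ≤ 2 * C := by
  by_cases hτ : τ = 0
  · simp only [jump, if_pos hτ, abs_zero]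
    linarith [abs_nonneg (x 0), hC 0]
  have := unitInterval.nhdsLT_neBot_of_ne_zero hτ
  have hleft : |Function.leftLim x τ| ≤ C :=
    le_of_tendsto (hx.tendsto_leftLim hτ).abs (Eventually.of_forall hC)
  simp only [jump, if_neg hτ]
  calc |x τ - Function.leftLim x τ| ≤ |x τ| + |Function.leftLim x τ| := abs_sub _ _
    _ ≤ 2 * C := by linarith [hC τ]

lemma bddAbove_jump_image (hx : Cadlag x) (τ : I) : BddAbove (jump x '' {s | s ≤ τ}) :=
  ⟨2 * dNorm x, forall_mem_image.2 fun s _ =>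
    (le_abs_self _).trans (hx.abs_jump_le hx.abs_le_dNorm s)⟩

lemma abs_posJumpSup_sub_le {C : ℝ} (hx : Cadlag x) (hy : Cadlag y)
    (hC : ∀ s, |x s - y s| ≤ C) (τ : I) :
    |posJumpSup x τ - posJumpSup y τ| ≤ 2 * C :=
  abs_csSup_image_sub_csSup_image_le ⟨0, unitInterval.nonneg τ⟩
    (hx.bddAbove_jump_image τ) (hy.bddAbove_jump_image τ) fun s _ => by
      rw [← hx.jump_sub hy]
      exact (hx.sub hy).abs_jump_le hC s

end Cadlag

/-- the first extremal positive trimming ("trim as you go") operator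
`T^{(1,+)}_{rim} = id - S_{+Δ}` is `3`-Lipschitz in the sup norm. -/
theorem stmt5 (x y : I → ℝ) (hx : Cadlag x) (hy : Cadlag y) :
    dNorm (fun τ => trimPos x τ - trimPos y τ) ≤ 3 * dNorm (fun τ => x τ - y τ) := by
  set D := dNorm fun τ => x τ - y τ
  have hD : ∀ τ, |x τ - y τ| ≤ D := (hx.sub hy).abs_le_dNorm
  refine ciSup_le fun τ => ?_
  calc |trimPos x τ - trimPos y τ|
      = |(x τ - y τ) - (posJumpSup x τ - posJumpSup y τ)| := by
        simp only [trimPos]; ring_nf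
    _ ≤ |x τ - y τ| + |posJumpSup x τ - posJumpSup y τ| := abs_sub _ _
    _ ≤ D + 2 * D := add_le_add (hD τ) (hx.abs_posJumpSup_sub_le hy hD τ)
    _ = 3 * D := by ring

end
end

section
/- The record time trimmer R_trim is not ‖·‖-continuous on 𝔻: for x := 1_{[1/3,1]} + 1_{[2/3,1]} and x_n := x + (1/n)·1_{[2/3,1]} (n ≥ 1), one has ‖x_n − x‖ = 1/n → 0, while R_trim(x) = 1_{[2/3,1]}, R_trim(x_n) = 1_{[1/3,1]}, and ‖R_trim(x_n) − R_trim(x)‖ = 1 for every n ≥ 1. -/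
open Filter Topology Set unitInterval

noncomputable section

open scoped Classical

/-!
`x` has two equal positive jumps, at `1/3` and `2/3`; the tie is broken by taking the first
record time, so `R_trim` removes the jump at `1/3`. Raising the second jump by `1/n` makes it the
unique largest one, so `R_trim(x_n)` removes the jump at `2/3` instead, however small `1/n` is.
The two trimmed paths then differ by `1_{[1/3,2/3)}`, of norm `1`.
-/

/-- `c · 1_{[t,1]}`. -/
def stepFun (t c : ℝ) : I → ℝ := fun τ => if t ≤ (τ : ℝ) then c else 0

lemma leftLim_eq_of_eventually_eq {f : I → ℝ} {s : I} {c : ℝ} (hs : s ≠ 0)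
    (h : ∀ᶠ τ in 𝓝[<] s, f τ = c) : Function.leftLim f s = c :=
  have : (𝓝[<] s).NeBot := nhdsLT_neBot_of_exists_lt ⟨0, pos_iff_ne_zero.2 hs⟩
  leftLim_eq_of_tendsto (tendsto_const_nhds.congr' (EventuallyEq.symm h))

lemma jump_eq_sub_of_eventually_eq {f : I → ℝ} {s : I} {c : ℝ} (hs : s ≠ 0)
    (h : ∀ᶠ τ in 𝓝[<] s, f τ = c) : jump f s = f s - c := by
  rw [jump, if_neg hs, leftLim_eq_of_eventually_eq hs h]

lemma eventually_stepFun_nhdsLT (t c : ℝ) (s : I) :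
    ∀ᶠ τ in 𝓝[<] s, stepFun t c τ = if t < (s : ℝ) then c else 0 := by
  by_cases hts : t < (s : ℝ)
  · have hopen : IsOpen {τ : I | t < (τ : ℝ)} := isOpen_lt continuous_const continuous_subtype_val
    filter_upwards [nhdsWithin_le_nhds (hopen.mem_nhds hts)] with τ hτ
    simp only [stepFun, if_pos hts, if_pos hτ.le]
  · filter_upwards [self_mem_nhdsWithin] with τ (hτ : (τ : ℝ) < s)
    rw [stepFun, if_neg hts, if_neg (not_le.2 (hτ.trans_le (not_lt.1 hts)))]

lemma ite_le_sub_ite_lt (t s c : ℝ) :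
    ((if t ≤ s then c else 0) - if t < s then c else 0) = if s = t then c else 0 := by
  rcases lt_trichotomy s t with h | rfl | h
  · simp [not_le.2 h, not_lt.2 h.le, h.ne]
  · simp
  · simp [h.le, h, h.ne']

lemma jump_stepFun_add_stepFun {t₁ t₂ : ℝ} (ht₁ : 0 < t₁) (ht₂ : 0 < t₂) (a b : ℝ) (s : I) :
    jump (stepFun t₁ a + stepFun t₂ b) s =
      (if (s : ℝ) = t₁ then a else 0) + (if (s : ℝ) = t₂ then b else 0) := by
  by_cases hs : s = 0
  · have hs' : (s : ℝ) = 0 := congrArg Subtype.val hs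
    rw [jump, if_pos hs, if_neg (by linarith), if_neg (by linarith), add_zero]
  have hleft : ∀ᶠ τ in 𝓝[<] s, (stepFun t₁ a + stepFun t₂ b) τ =
      (if t₁ < (s : ℝ) then a else 0) + (if t₂ < (s : ℝ) then b else 0) := by
    filter_upwards [eventually_stepFun_nhdsLT t₁ a s, eventually_stepFun_nhdsLT t₂ b s]
      with τ h₁ h₂
    rw [Pi.add_apply, h₁, h₂]
  rw [jump_eq_sub_of_eventually_eq hs hleft, Pi.add_apply, add_sub_add_comm, stepFun, stepFun,
    ite_le_sub_ite_lt, ite_le_sub_ite_lt]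

lemma recordTrim_eq_of_first_max_jump {f : I → ℝ} {t : I} (ht : 0 < t) (hpos : 0 < jump f t)
    (hmax : ∀ s, jump f s ≤ jump f t) (hfirst : ∀ s < t, jump f s < jump f t) (τ : I) :
    recordTrim f τ = if t ≤ τ then f τ - jump f t else f τ := by
  have hsup : posJumpSup f 1 = jump f t :=
    IsGreatest.csSup_eq ⟨⟨t, le_one', rfl⟩, by rintro _ ⟨s, -, rfl⟩; exact hmax s⟩
  have hmem : t ∈ posA f 1 := ⟨ht, le_one', hpos, hsup.symm⟩
  have hinf : sInf (posA f 1) = t := by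
    refine IsLeast.csInf_eq ⟨hmem, fun s ⟨_, _, _, hs⟩ => ?_⟩
    by_contra! hst
    exact (hfirst s hst).ne (hs.trans hsup)
  simp only [recordTrim, hinf, show (posA f 1).Nonempty from ⟨t, hmem⟩, true_and]

lemma dNorm_eq_of_abs_le {f : I → ℝ} {c : ℝ} (hle : ∀ τ, |f τ| ≤ c) {τ₀ : I}
    (heq : |f τ₀| = c) : dNorm f = c :=
  le_antisymm (ciSup_le hle) (heq ▸ le_ciSup ⟨c, by rintro _ ⟨τ, rfl⟩; exact hle τ⟩ τ₀)

lemma dNorm_stepFun {t : ℝ} (ht : t ≤ 1) (c : ℝ) : dNorm (stepFun t c) = |c| :=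
  dNorm_eq_of_abs_le (τ₀ := 1) (fun τ => by unfold stepFun; split_ifs <;> simp)
    (by simp [stepFun, ht])

lemma recordTrim_stepFun_add_stepFun_of_le {t₁ t₂ a b : ℝ} (ht₁ : 0 < t₁) (ht₁₂ : t₁ < t₂)
    (ht₂ : t₂ ≤ 1) (ha : 0 < a) (hba : b ≤ a) :
    recordTrim (stepFun t₁ a + stepFun t₂ b) = stepFun t₂ b := by
  set t : I := ⟨t₁, ht₁.le, by linarith⟩
  have hjump := jump_stepFun_add_stepFun ht₁ (ht₁.trans ht₁₂) a b
  have hjt : jump (stepFun t₁ a + stepFun t₂ b) t = a := by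
    rw [hjump, if_pos rfl, if_neg ht₁₂.ne]; ring
  funext τ
  rw [recordTrim_eq_of_first_max_jump (t := t) ht₁ (hjt.symm ▸ ha)
    (fun s => by rw [hjump, hjt]; split_ifs <;> linarith)
    (fun s hs => by
      have hs' : (s : ℝ) < t₁ := hs
      rw [hjump, hjt, if_neg hs'.ne, if_neg (by linarith)]; linarith), hjt]
  simp only [Pi.add_apply, stepFun, ← Subtype.coe_le_coe]
  split_ifs <;> ring

lemma recordTrim_stepFun_add_stepFun_of_lt {t₁ t₂ a b : ℝ} (ht₁ : 0 < t₁) (ht₁₂ : t₁ < t₂)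
    (ht₂ : t₂ ≤ 1) (hb : 0 < b) (hab : a < b) :
    recordTrim (stepFun t₁ a + stepFun t₂ b) = stepFun t₁ a := by
  set t : I := ⟨t₂, by linarith, ht₂⟩
  have hjump := jump_stepFun_add_stepFun ht₁ (ht₁.trans ht₁₂) a b
  have hjt : jump (stepFun t₁ a + stepFun t₂ b) t = b := by
    rw [hjump, if_neg ht₁₂.ne', if_pos rfl, zero_add]
  funext τ
  rw [recordTrim_eq_of_first_max_jump (t := t) (ht₁.trans ht₁₂) (hjt.symm ▸ hb)
    (fun s => by rw [hjump, hjt]; split_ifs <;> linarith)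
    (fun s hs => by
      have hs' : (s : ℝ) < t₂ := hs
      rw [hjump, hjt, if_neg hs'.ne, add_zero]; split_ifs <;> linarith), hjt]
  simp only [Pi.add_apply, stepFun, ← Subtype.coe_le_coe]
  split_ifs <;> ring

/-- the record time trimmer `R_trim` is not `‖·‖`-continuous:
with `x = 1_{[1/3,1]} + 1_{[2/3,1]}` and `x_n = x + (1/n)·1_{[2/3,1]}` one has
`‖x_n - x‖ = 1/n → 0` while `R_trim(x) = 1_{[2/3,1]}`, `R_trim(x_n) = 1_{[1/3,1]}`
and `‖R_trim(x_n) - R_trim(x)‖ = 1` for every `n ≥ 1`. -/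
theorem stmt17 (x : I → ℝ) (xn : ℕ → I → ℝ)
    (hxdef : ∀ τ : I, x τ =
      (if (1/3 : ℝ) ≤ (τ : ℝ) then 1 else 0) + (if (2/3 : ℝ) ≤ (τ : ℝ) then 1 else 0))
    (hxndef : ∀ n : ℕ, 1 ≤ n → ∀ τ : I,
      xn n τ = x τ + (1 / (n : ℝ)) * (if (2/3 : ℝ) ≤ (τ : ℝ) then 1 else 0)) :
    (∀ n : ℕ, 1 ≤ n → dNorm (fun τ => xn n τ - x τ) = 1 / (n : ℝ)) ∧
    Tendsto (fun n => dNorm (fun τ => xn n τ - x τ)) atTop (𝓝 0) ∧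
    (∀ τ : I, recordTrim x τ = if (2/3 : ℝ) ≤ (τ : ℝ) then 1 else 0) ∧
    (∀ n : ℕ, 1 ≤ n → ∀ τ : I,
      recordTrim (xn n) τ = if (1/3 : ℝ) ≤ (τ : ℝ) then 1 else 0) ∧
    (∀ n : ℕ, 1 ≤ n → dNorm (fun τ => recordTrim (xn n) τ - recordTrim x τ) = 1) := by
  have hinv : ∀ n : ℕ, 1 ≤ n → 0 < 1 / (n : ℝ) := fun n hn => by
    have : (0 : ℝ) < n := by exact_mod_cast hn
    positivity
  have hx : x = stepFun (1/3) 1 + stepFun (2/3) 1 := funext hxdef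
  have hxn : ∀ n : ℕ, 1 ≤ n → xn n = stepFun (1/3) 1 + stepFun (2/3) (1 + 1 / n) := by
    intro n hn
    funext τ
    simp only [hxndef n hn, hxdef, Pi.add_apply, stepFun]
    split_ifs <;> ring
  have hdist : ∀ n : ℕ, 1 ≤ n → dNorm (fun τ => xn n τ - x τ) = 1 / (n : ℝ) := by
    intro n hn
    have hdiff : (fun τ => xn n τ - x τ) = stepFun (2/3) (1 / n) := by
      funext τ
      simp only [hxndef n hn, stepFun]
      split_ifs <;> ring
    rw [hdiff, dNorm_stepFun (by norm_num), abs_of_pos (hinv n hn)]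
  have hRx : recordTrim x = stepFun (2/3) 1 := by
    rw [hx]
    exact recordTrim_stepFun_add_stepFun_of_le (by norm_num) (by norm_num) (by norm_num)
      one_pos le_rfl
  have hRxn : ∀ n : ℕ, 1 ≤ n → recordTrim (xn n) = stepFun (1/3) 1 := by
    intro n hn
    rw [hxn n hn]
    exact recordTrim_stepFun_add_stepFun_of_lt (by norm_num) (by norm_num) (by norm_num)
      (by linarith [hinv n hn]) (by linarith [hinv n hn])
  refine ⟨hdist, ?_, fun τ => by rw [hRx]; rfl, fun n hn τ => by rw [hRxn n hn]; rfl,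
    fun n hn => ?_⟩
  · refine tendsto_one_div_atTop_nhds_zero_nat.congr' ?_
    filter_upwards [eventually_ge_atTop 1] with n hn using (hdist n hn).symm
  · rw [hRxn n hn, hRx]
    refine dNorm_eq_of_abs_le (τ₀ := ⟨1/3, by norm_num, by norm_num⟩) (fun τ => ?_) ?_
    · simp only [stepFun]
      split_ifs <;> norm_num
    · norm_num [stepFun]

end
end

section
/- The record time trimmer R_trim is not J1-continuous on 𝔻: for x := 1_{[1/3,1]} + 1_{[2/3,1]} and x_n := x + (1/n)·1_{[2/3,1]} (n ≥ 1), the sequence x_n converges to x in the J1-topology, but R_trim(x_n) does not converge to R_trim(x) in the J1-topology; indeed, for every sequence λ_n ∈ Λ with ‖λ_n − I‖ → 0, once λ_n^{-1}(1/3) < 2/3 one has ‖R_trim(x_n) ∘ λ_n − R_trim(x)‖ ≥ 1, so ‖R_trim(x_n) ∘ λ_n − R_trim(x)‖ does not tend to 0. -/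
open Filter Topology Set unitInterval

noncomputable section

open scoped Classical

/-! For `x = 1_{[a,1]} + B·1_{[b,1]}` with `0 < a < b`: if `B ≤ 1` the first record jump is the
one at `a`, and `R_trim` leaves `B·1_{[b,1]}`; if `B > 1` the only record jump is at `b`, and
`R_trim` leaves `1_{[a,1]}`. So raising the second jump slightly above `1` moves the surviving
step from `b` to `a`. A time change within `b - a` of the identity sends some `s < b` to `a`, and
there the two trimmed paths differ by `1`. -/

section SupNorm

lemma dNorm_nonneg (f : I → ℝ) : 0 ≤ dNorm f :=
  Real.iSup_nonneg fun τ => abs_nonneg (f τ)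

lemma abs_le_dNorm {f : I → ℝ} (hf : BddAbove (range fun τ => |f τ|)) (τ : I) :
    |f τ| ≤ dNorm f :=
  le_ciSup hf τ

lemma dNorm_le {f : I → ℝ} {M : ℝ} (hM : ∀ τ, |f τ| ≤ M) : dNorm f ≤ M :=
  ciSup_le hM

lemma abs_sub_le_dNorm_sub_id (l : I → I) (τ : I) :
    |(l τ : ℝ) - τ| ≤ dNorm (fun τ => (l τ : ℝ) - τ) := by
  refine abs_le_dNorm (f := fun τ => (l τ : ℝ) - τ) ⟨1, ?_⟩ τ
  rintro _ ⟨t, rfl⟩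
  have := (l t).2; have := t.2
  simp only [Set.mem_Icc] at *
  rw [abs_le]; constructor <;> linarith

end SupNorm

section TimeChange

lemma IsTimeChange.id : IsTimeChange id :=
  ⟨continuous_id, strictMono_id, rfl, rfl⟩

lemma IsTimeChange.exists_apply_eq {l : I → I} (hl : IsTimeChange l) (t : I) :
    ∃ s, l s = t := by
  obtain ⟨hcont, -, hl0, hl1⟩ := hl
  have ht : t ∈ Icc (l 0) (l 1) := by rw [hl0, hl1]; exact ⟨nonneg', le_one'⟩
  obtain ⟨s, -, hs⟩ := intermediate_value_Icc zero_le_one hcont.continuousOn ht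
  exact ⟨s, hs⟩

lemma J1Tendsto_of_tendsto_dNorm_sub {xn : ℕ → I → ℝ} {x : I → ℝ}
    (h : Tendsto (fun n => dNorm (fun τ => xn n τ - x τ)) atTop (𝓝 0)) : J1Tendsto xn x := by
  refine ⟨fun _ => id, fun _ => IsTimeChange.id, ?_, h⟩
  simp only [id, sub_self, dNorm, abs_zero, ciSup_const, tendsto_const_nhds]

end TimeChange

namespace RecordTrim

def unitStep (a : I) (τ : I) : ℝ := if a ≤ τ then 1 else 0

def twoStep (a b : I) (B : ℝ) (τ : I) : ℝ := unitStep a τ + B * unitStep b τ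

lemma tendsto_unitStep_nhdsLT (a τ : I) :
    Tendsto (unitStep a) (𝓝[<] τ) (𝓝 (if a < τ then 1 else 0)) := by
  refine tendsto_const_nhds.congr' ?_
  split_ifs with h
  · filter_upwards [nhdsWithin_le_nhds (lt_mem_nhds h)] with s hs
    simp [unitStep, hs.le]
  · filter_upwards [self_mem_nhdsWithin] with s hs
    simp [unitStep, (lt_of_lt_of_le hs (not_lt.mp h)).not_ge]

lemma unitStep_sub_leftLim (a τ : I) :
    unitStep a τ - (if a < τ then 1 else 0) = if τ = a then 1 else 0 := by
  unfold unitStep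
  rcases lt_trichotomy a τ with h | rfl | h
  · simp [h, h.le, h.ne']
  · simp
  · simp [h.not_gt, h.not_ge, h.ne]

lemma jump_twoStep {a b : I} (ha : 0 < a) (hb : 0 < b) (B : ℝ) (τ : I) :
    jump (twoStep a b B) τ = (if τ = a then 1 else 0) + B * (if τ = b then 1 else 0) := by
  by_cases hτ : τ = 0
  · subst hτ; simp [jump, ha.ne, hb.ne]
  have : (𝓝[<] τ).NeBot := nhdsLT_neBot_of_exists_lt ⟨0, pos_iff_ne_zero.mpr hτ⟩
  have hlim : Function.leftLim (twoStep a b B) τ =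
      (if a < τ then 1 else 0) + B * (if b < τ then 1 else 0) :=
    leftLim_eq_of_tendsto
      ((tendsto_unitStep_nhdsLT a τ).add ((tendsto_unitStep_nhdsLT b τ).const_mul B))
  rw [jump, if_neg hτ, hlim, twoStep, ← unitStep_sub_leftLim a, ← unitStep_sub_leftLim b]
  ring

lemma jump_twoStep_left {a b : I} (ha : 0 < a) (hab : a < b) (B : ℝ) :
    jump (twoStep a b B) a = 1 := by
  simp [jump_twoStep ha (ha.trans hab), hab.ne]

lemma jump_twoStep_right {a b : I} (ha : 0 < a) (hab : a < b) (B : ℝ) :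
    jump (twoStep a b B) b = B := by
  simp [jump_twoStep ha (ha.trans hab), hab.ne']

lemma jump_twoStep_of_ne {a b : I} (ha : 0 < a) (hab : a < b) (B : ℝ) {τ : I}
    (hτa : τ ≠ a) (hτb : τ ≠ b) : jump (twoStep a b B) τ = 0 := by
  simp [jump_twoStep ha (ha.trans hab), hτa, hτb]

lemma posJumpSup_twoStep {a b : I} (ha : 0 < a) (hab : a < b) (B : ℝ) :
    posJumpSup (twoStep a b B) 1 = max 1 B := by
  refine IsGreatest.csSup_eq ⟨?_, ?_⟩
  · rcases le_total B 1 with hB | hB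
    · exact ⟨a, le_one', by rw [jump_twoStep_left ha hab, max_eq_left hB]⟩
    · exact ⟨b, le_one', by rw [jump_twoStep_right ha hab, max_eq_right hB]⟩
  · rintro _ ⟨τ, -, rfl⟩
    by_cases hτa : τ = a
    · subst hτa; rw [jump_twoStep_left ha hab]; exact le_max_left _ _
    by_cases hτb : τ = b
    · subst hτb; rw [jump_twoStep_right ha hab]; exact le_max_right _ _
    rw [jump_twoStep_of_ne ha hab B hτa hτb]
    exact zero_le_one.trans (le_max_left _ _)

lemma mem_posA_twoStep {a b : I} (ha : 0 < a) (hab : a < b) {B : ℝ} {τ : I}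
    (hτ : τ ∈ posA (twoStep a b B) 1) : τ = a ∨ τ = b := by
  by_contra! h
  have := hτ.2.2.1
  rw [jump_twoStep_of_ne ha hab B h.1 h.2] at this
  exact this.false

lemma isLeast_posA_twoStep_of_le_one {a b : I} (ha : 0 < a) (hab : a < b) {B : ℝ}
    (hB : B ≤ 1) : IsLeast (posA (twoStep a b B) 1) a := by
  refine ⟨⟨ha, le_one', ?_, ?_⟩, fun τ hτ => ?_⟩
  · rw [jump_twoStep_left ha hab]; exact zero_lt_one
  · rw [jump_twoStep_left ha hab, posJumpSup_twoStep ha hab, max_eq_left hB]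
  · rcases mem_posA_twoStep ha hab hτ with rfl | rfl
    exacts [le_rfl, hab.le]

lemma isLeast_posA_twoStep_of_one_lt {a b : I} (ha : 0 < a) (hab : a < b) {B : ℝ}
    (hB : 1 < B) : IsLeast (posA (twoStep a b B) 1) b := by
  have hjump : jump (twoStep a b B) b = posJumpSup (twoStep a b B) 1 := by
    rw [jump_twoStep_right ha hab, posJumpSup_twoStep ha hab, max_eq_right hB.le]
  refine ⟨⟨ha.trans hab, le_one', ?_, hjump⟩, fun τ hτ => ?_⟩
  · rw [jump_twoStep_right ha hab]; exact zero_lt_one.trans hB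
  · rcases mem_posA_twoStep ha hab hτ with rfl | rfl
    · have := hτ.2.2.2
      rw [← hjump, jump_twoStep_left ha hab, jump_twoStep_right ha hab] at this
      exact absurd this hB.ne
    · exact le_rfl

lemma recordTrim_of_isLeast {x : I → ℝ} {r : I} (hr : IsLeast (posA x 1) r) (τ : I) :
    recordTrim x τ = x τ - jump x r * unitStep r τ := by
  have hne : (posA x 1).Nonempty := ⟨r, hr.1⟩
  simp only [recordTrim, hr.csInf_eq, unitStep, hne, true_and]
  split_ifs <;> ring

lemma recordTrim_twoStep_of_le_one {a b : I} (ha : 0 < a) (hab : a < b) {B : ℝ}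
    (hB : B ≤ 1) (τ : I) : recordTrim (twoStep a b B) τ = B * unitStep b τ := by
  rw [recordTrim_of_isLeast (isLeast_posA_twoStep_of_le_one ha hab hB),
    jump_twoStep_left ha hab, twoStep]
  unfold unitStep
  split_ifs <;> ring

lemma recordTrim_twoStep_of_one_lt {a b : I} (ha : 0 < a) (hab : a < b) {B : ℝ}
    (hB : 1 < B) (τ : I) : recordTrim (twoStep a b B) τ = unitStep a τ := by
  rw [recordTrim_of_isLeast (isLeast_posA_twoStep_of_one_lt ha hab hB),
    jump_twoStep_right ha hab, twoStep]
  ring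

lemma dNorm_twoStep_sub_le (a b : I) (B C : ℝ) :
    dNorm (fun τ => twoStep a b B τ - twoStep a b C τ) ≤ |B - C| := by
  refine dNorm_le fun τ => ?_
  have : twoStep a b B τ - twoStep a b C τ = (B - C) * unitStep b τ := by
    unfold twoStep; ring
  rw [this, abs_mul]
  unfold unitStep
  split_ifs <;> simp

lemma one_le_dNorm_recordTrim_twoStep_comp {a b : I} (ha : 0 < a) (hab : a < b) {B : ℝ}
    (hB : 1 < B) (l : I → I) {s : I} (hls : l s = a) (hs : s < b) :
    1 ≤ dNorm (fun τ => recordTrim (twoStep a b B) (l τ) - recordTrim (twoStep a b 1) τ) := by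
  simp only [recordTrim_twoStep_of_one_lt ha hab hB,
    recordTrim_twoStep_of_le_one ha hab le_rfl, one_mul]
  have hbdd : BddAbove (range fun τ => |unitStep a (l τ) - unitStep b τ|) := by
    refine ⟨1, ?_⟩
    rintro _ ⟨τ, rfl⟩
    dsimp only
    unfold unitStep
    split_ifs <;> norm_num
  calc (1 : ℝ) = |unitStep a (l s) - unitStep b s| := by simp [unitStep, hls, hs.not_ge]
    _ ≤ _ := abs_le_dNorm hbdd s

lemma not_J1Tendsto_recordTrim_twoStep {a b : I} (ha : 0 < a) (hab : a < b)
    {xn : ℕ → I → ℝ} (hxn : ∀ᶠ n in atTop, ∃ B, 1 < B ∧ xn n = twoStep a b B) :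
    ¬ J1Tendsto (fun n => recordTrim (xn n)) (recordTrim (twoStep a b 1)) := by
  rintro ⟨l, hl, hlI, hconv⟩
  obtain ⟨n, ⟨B, hB, hxnB⟩, hclose, hfar⟩ := (hxn.and ((hlI.eventually
    (gt_mem_nhds (sub_pos.mpr hab))).and (hconv.eventually (gt_mem_nhds one_pos)))).exists
  obtain ⟨s, hs⟩ := (hl n).exists_apply_eq a
  have hsb : s < b := by
    have := (abs_le.mp (abs_sub_le_dNorm_sub_id (l n) s)).1
    rw [hs] at this
    exact Subtype.coe_lt_coe.mp (by linarith)
  simp only [hxnB] at hfar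
  exact hfar.not_ge (one_le_dNorm_recordTrim_twoStep_comp ha hab hB (l n) hs hsb)

end RecordTrim

open RecordTrim in
/-- the record time trimmer `R_trim` is not `J₁`-continuous:
with `x = 1_{[1/3,1]} + 1_{[2/3,1]}` and `x_n = x + (1/n)·1_{[2/3,1]}` one has
`x_n → x` in `J₁`, yet for any `λ_n ∈ Λ` with `‖λ_n - I‖ → 0`, whenever
`λ_n⁻¹(1/3) < 2/3` (and `n ≥ 1`) one has `‖R_trim(x_n) ∘ λ_n - R_trim(x)‖ ≥ 1`;
hence `R_trim(x_n)` does not converge to `R_trim(x)` in `J₁`. -/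
theorem stmt18 (x : I → ℝ) (xn : ℕ → I → ℝ)
    (hxdef : ∀ τ : I, x τ =
      (if (1/3 : ℝ) ≤ (τ : ℝ) then 1 else 0) + (if (2/3 : ℝ) ≤ (τ : ℝ) then 1 else 0))
    (hxndef : ∀ n : ℕ, 1 ≤ n → ∀ τ : I,
      xn n τ = x τ + (1 / (n : ℝ)) * (if (2/3 : ℝ) ≤ (τ : ℝ) then 1 else 0)) :
    J1Tendsto xn x ∧
    (∀ l : ℕ → I → I, (∀ n, IsTimeChange (l n)) →
      Tendsto (fun n => dNorm (fun τ => (l n τ : ℝ) - (τ : ℝ))) atTop (𝓝 0) →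
      ∀ n : ℕ, 1 ≤ n → ∀ s : I, (l n s : ℝ) = 1/3 → (s : ℝ) < 2/3 →
        1 ≤ dNorm (fun τ => recordTrim (xn n) (l n τ) - recordTrim x τ)) ∧
    ¬ J1Tendsto (fun n => recordTrim (xn n)) (recordTrim x) := by
  set a : I := ⟨1/3, by norm_num⟩
  set b : I := ⟨2/3, by norm_num⟩
  have ha : 0 < a := Subtype.coe_lt_coe.mp (by norm_num [a])
  have hab : a < b := Subtype.coe_lt_coe.mp (by norm_num [a, b])
  have hx : x = twoStep a b 1 := funext fun τ => by rw [hxdef, twoStep, one_mul]; rfl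
  have hstep : ∀ τ : I, unitStep b τ = if (2/3 : ℝ) ≤ (τ : ℝ) then 1 else 0 := fun _ => rfl
  have hxn : ∀ n : ℕ, 1 ≤ n → xn n = twoStep a b (1 + 1 / n) := fun n hn =>
    funext fun τ => by simp only [hxndef n hn, hx, twoStep, hstep]; ring
  have hB : ∀ n : ℕ, 1 ≤ n → 1 < 1 + 1 / (n : ℝ) := fun n hn => by
    have : (0 : ℝ) < n := by exact_mod_cast hn
    simpa using this
  refine ⟨J1Tendsto_of_tendsto_dNorm_sub ?_, ?_, ?_⟩
  · refine squeeze_zero' (.of_forall fun n => dNorm_nonneg _) ?_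
      tendsto_one_div_atTop_nhds_zero_nat
    filter_upwards [eventually_ge_atTop 1] with n hn
    simpa [hxn n hn, hx, abs_of_nonneg] using dNorm_twoStep_sub_le a b (1 + 1 / n) 1
  · intro l _ _ n hn s hls hs
    rw [hxn n hn, hx]
    exact one_le_dNorm_recordTrim_twoStep_comp ha hab (hB n hn) (l n) (Subtype.ext hls) hs
  · rw [hx]
    refine not_J1Tendsto_recordTrim_twoStep ha hab ?_
    filter_upwards [eventually_ge_atTop 1] with n hn
    exact ⟨_, hB n hn, hxn n hn⟩

end
end
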